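/- arXiv:1912.08022 — 2 statements merged into one kernel-verified Lean document; each statement's English description precedes it below -/
import Mathlib

section
/- The metric projection onto the von Mises set is Lipschitz in the damage parameter: for all ζ₁, ζ₂ ≥ 0 and every τ ∈ S^d, ‖P_{K(ζ₁)}τ − P_{K(ζ₂)}τ‖ ≤ σ_Y |ζ₁ − ζ₂|. -/
open scoped RealInnerProductSpace

/-- The space of `d × d` real matrices equipped with the Frobenius inner product and norm,
modeled as `EuclideanSpace ℝ (Fin d × Fin d)`. -/
abbrev MatF (d : ℕ) : Type := EuclideanSpace ℝ (Fin d × Fin d)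

/-- The trace of a matrix. -/
def MatF.trace {d : ℕ} (τ : MatF d) : ℝ := ∑ i : Fin d, τ (i, i)

/-- The identity matrix. -/
noncomputable def MatF.idm (d : ℕ) : MatF d :=
  (EuclideanSpace.equiv (Fin d × Fin d) ℝ).symm (fun p => if p.1 = p.2 then 1 else 0)

/-- A matrix is symmetric. -/
def MatF.IsSymm {d : ℕ} (τ : MatF d) : Prop := ∀ i j : Fin d, τ (i, j) = τ (j, i)

/-- The deviatoric part `τ^D = τ − (tr τ / d) I` of a matrix. -/
noncomputable def MatF.dev {d : ℕ} (τ : MatF d) : MatF d :=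
  τ - (MatF.trace τ / (d : ℝ)) • MatF.idm d

/-- The von Mises set `K(ζ) = {τ ∈ S^d : ‖τ^D‖ ≤ ζ σ_Y}`. -/
noncomputable def vonMises (d : ℕ) (σY ζ : ℝ) : Set (MatF d) :=
  {τ : MatF d | τ.IsSymm ∧ ‖τ.dev‖ ≤ ζ * σY}

/-- `p` is the metric projection of `x` onto the set `K`: `p ∈ K` and `p` is closest to `x`. -/
def IsProjOn {d : ℕ} (K : Set (MatF d)) (x p : MatF d) : Prop :=
  p ∈ K ∧ ∀ q ∈ K, dist x p ≤ dist x q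

/- ### Auxiliary lemmas -/

lemma MatF.inner_idm (d : ℕ) (x : MatF d) : ⟪x, MatF.idm d⟫ = MatF.trace x := by
  simp [PiLp.inner_apply, RCLike.inner_apply, MatF.idm, MatF.trace, Fintype.sum_prod_type]

lemma MatF.trace_idm (d : ℕ) : MatF.trace (MatF.idm d) = d := by
  simp [MatF.idm, MatF.trace]

lemma MatF.trace_sub (d : ℕ) (x y : MatF d) :
    MatF.trace (x - y) = MatF.trace x - MatF.trace y := by
  simp [MatF.trace, Finset.sum_sub_distrib]

lemma MatF.trace_smul (d : ℕ) (a : ℝ) (x : MatF d) :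
    MatF.trace (a • x) = a * MatF.trace x := by
  simp [MatF.trace, Finset.mul_sum]

lemma MatF.trace_dev (d : ℕ) (hd : 1 ≤ d) (x : MatF d) : MatF.trace (MatF.dev x) = 0 := by
  have hd' : (d : ℝ) ≠ 0 := by positivity
  simp [MatF.dev, MatF.trace_sub, MatF.trace_smul, MatF.trace_idm, div_mul_cancel₀, hd']

lemma MatF.isSymm_dev {d : ℕ} {τ : MatF d} (hτ : τ.IsSymm) : (MatF.dev τ).IsSymm := by
  intro i j
  simp only [MatF.dev, PiLp.sub_apply, PiLp.smul_apply, smul_eq_mul]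
  rw [hτ i j]
  congr 1
  simp [MatF.idm, eq_comm]

lemma proj_eq_of_varineq {d : ℕ} {K : Set (MatF d)} {τ p q : MatF d}
    (hq : q ∈ K) (hvar : ∀ r ∈ K, ⟪τ - q, r - q⟫ ≤ 0)
    (hp : IsProjOn K τ p) : p = q := by
  have h1 : ‖τ - p‖ ≤ ‖τ - q‖ := by
    have := hp.2 q hq; simpa [dist_eq_norm] using this
  have h2 : ‖τ - p‖ ^ 2 = ‖τ - q‖ ^ 2 - 2 * ⟪τ - q, p - q⟫ + ‖p - q‖ ^ 2 := by
    have he : τ - p = (τ - q) - (p - q) := by abel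
    rw [he, @norm_sub_sq_real]
  have h3 := hvar p hp.1
  have h5 : ‖p - q‖ = 0 := by nlinarith [norm_nonneg (p - q), norm_nonneg (τ - p), norm_nonneg (τ - q)]
  exact sub_eq_zero.mp (norm_eq_zero.mp h5)

/-- Explicit formula for the projection onto the von Mises set. -/
lemma vonMises_proj_formula {d : ℕ} (hd : 1 ≤ d) {σY ζ : ℝ} (hσY : 0 < σY) (hζ : 0 ≤ ζ)
    {τ : MatF d} (hτ : τ.IsSymm) {p : MatF d} (hp : IsProjOn (vonMises d σY ζ) τ p) :
    p = τ - (1 - min 1 (ζ * σY / ‖MatF.dev τ‖)) • MatF.dev τ := by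
  set s : MatF d := MatF.dev τ with hs
  set c : ℝ := min 1 (ζ * σY / ‖s‖) with hc
  set q : MatF d := τ - (1 - c) • s with hqdef
  have hζσ : 0 ≤ ζ * σY := mul_nonneg hζ hσY.le
  have hc0 : 0 ≤ c := le_min zero_le_one (by positivity)
  have hc1 : c ≤ 1 := min_le_left _ _
  have htr_s : MatF.trace s = 0 := MatF.trace_dev d hd τ
  -- trace of q equals trace of τ
  have htrq : MatF.trace q = MatF.trace τ := by
    rw [hqdef, MatF.trace_sub, MatF.trace_smul, htr_s]; ring
  -- deviatoric part of q
  have hdevq : MatF.dev q = c • s := by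
    rw [MatF.dev, htrq]
    rw [hqdef, hs, MatF.dev]
    module
  -- norm bound for dev q
  have hnormq : ‖MatF.dev q‖ ≤ ζ * σY := by
    rw [hdevq, norm_smul, Real.norm_eq_abs, abs_of_nonneg hc0]
    rcases eq_or_ne ‖s‖ 0 with h0 | h0
    · simp [h0, hζσ]
    · have hpos : 0 < ‖s‖ := lt_of_le_of_ne (norm_nonneg s) (Ne.symm h0)
      calc c * ‖s‖ ≤ (ζ * σY / ‖s‖) * ‖s‖ :=
            mul_le_mul_of_nonneg_right (min_le_right _ _) (norm_nonneg s)
        _ = ζ * σY := div_mul_cancel₀ _ h0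
  -- q is symmetric
  have hssymm : s.IsSymm := MatF.isSymm_dev hτ
  have hqsymm : q.IsSymm := by
    intro i j
    simp only [hqdef, PiLp.sub_apply, PiLp.smul_apply, smul_eq_mul]
    rw [hτ i j, hssymm i j]
  have hqmem : q ∈ vonMises d σY ζ := ⟨hqsymm, hnormq⟩
  -- difference τ - q
  have hτq : τ - q = (1 - c) • s := by rw [hqdef]; abel
  -- inner product computations
  have hsτ : ⟪s, τ⟫ = ‖s‖ ^ 2 := by
    have : τ = s + (MatF.trace τ / (d : ℝ)) • MatF.idm d := by rw [hs, MatF.dev]; abel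
    rw [this, inner_add_right, real_inner_smul_right, MatF.inner_idm, htr_s,
      real_inner_self_eq_norm_sq]
    ring
  -- variational inequality
  have hvar : ∀ r ∈ vonMises d σY ζ, ⟪τ - q, r - q⟫ ≤ 0 := by
    intro r hr
    rw [hτq, real_inner_smul_left]
    have hsq : ⟪s, q⟫ = ⟪s, τ⟫ - (1 - c) * ‖s‖ ^ 2 := by
      rw [hqdef, inner_sub_right, real_inner_smul_right, real_inner_self_eq_norm_sq]
    have hsr : ⟪s, r⟫ ≤ ζ * σY * ‖s‖ := by
      have hrd : r = MatF.dev r + (MatF.trace r / (d : ℝ)) • MatF.idm d := by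
        rw [MatF.dev]; abel
      have : ⟪s, r⟫ = ⟪s, MatF.dev r⟫ := by
        nth_rewrite 1 [hrd]
        rw [inner_add_right, real_inner_smul_right, MatF.inner_idm, htr_s]
        ring
      rw [this]
      calc ⟪s, MatF.dev r⟫ ≤ ‖s‖ * ‖MatF.dev r‖ := real_inner_le_norm s _
        _ ≤ ‖s‖ * (ζ * σY) := mul_le_mul_of_nonneg_left hr.2 (norm_nonneg s)
        _ = ζ * σY * ‖s‖ := by ring
    have hinner : ⟪s, r - q⟫ = ⟪s, r⟫ - ⟪s, τ⟫ + (1 - c) * ‖s‖ ^ 2 := by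
      rw [inner_sub_right, hsq]; ring
    rcases eq_or_ne ‖s‖ 0 with h0 | h0
    · have : s = (0 : MatF d) := norm_eq_zero.mp h0
      simp [this]
    · have hpos : 0 < ‖s‖ := lt_of_le_of_ne (norm_nonneg s) (Ne.symm h0)
      rcases le_or_gt 1 (ζ * σY / ‖s‖) with hcase | hcase
      · have : c = 1 := min_eq_left hcase
        simp [this]
      · have hceq : c = ζ * σY / ‖s‖ := min_eq_right hcase.le
        have hcs : c * ‖s‖ = ζ * σY := by
          rw [hceq]; exact div_mul_cancel₀ _ h0
        have hfac : ⟪s, r - q⟫ ≤ 0 := by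
          rw [hinner, hsτ]
          nlinarith [hsr, sq_nonneg ‖s‖]
        exact mul_nonpos_of_nonneg_of_nonpos (by linarith) hfac
  exact proj_eq_of_varineq hqmem hvar hp

/-- The metric projection onto the von Mises set is Lipschitz in the damage parameter:
`‖P_{K(ζ₁)}τ − P_{K(ζ₂)}τ‖ ≤ σ_Y |ζ₁ − ζ₂|` for symmetric `τ` and `ζ₁, ζ₂ ≥ 0`. -/
theorem vonMises_proj_lipschitz_damage (d : ℕ) (hd : 1 ≤ d) (σY : ℝ) (hσY : 0 < σY)
    (ζ₁ ζ₂ : ℝ) (hζ₁ : 0 ≤ ζ₁) (hζ₂ : 0 ≤ ζ₂) (τ : MatF d) (hτ : τ.IsSymm)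
    (p₁ p₂ : MatF d) (hp₁ : IsProjOn (vonMises d σY ζ₁) τ p₁)
    (hp₂ : IsProjOn (vonMises d σY ζ₂) τ p₂) :
    ‖p₁ - p₂‖ ≤ σY * |ζ₁ - ζ₂| := by
  set s : MatF d := MatF.dev τ with hs
  set c₁ : ℝ := min 1 (ζ₁ * σY / ‖s‖) with hc₁
  set c₂ : ℝ := min 1 (ζ₂ * σY / ‖s‖) with hc₂
  have e₁ : p₁ = τ - (1 - c₁) • s := vonMises_proj_formula hd hσY hζ₁ hτ hp₁
  have e₂ : p₂ = τ - (1 - c₂) • s := vonMises_proj_formula hd hσY hζ₂ hτ hp₂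
  have hdiff : p₁ - p₂ = (c₁ - c₂) • s := by rw [e₁, e₂]; module
  rw [hdiff, norm_smul, Real.norm_eq_abs]
  rcases eq_or_ne ‖s‖ 0 with h0 | h0
  · rw [h0, mul_zero]; positivity
  · have hpos : 0 < ‖s‖ := lt_of_le_of_ne (norm_nonneg s) (Ne.symm h0)
    have hmin : |c₁ - c₂| ≤ |ζ₁ * σY / ‖s‖ - ζ₂ * σY / ‖s‖| := by
      calc |c₁ - c₂| ≤ max |(1 : ℝ) - 1| |ζ₁ * σY / ‖s‖ - ζ₂ * σY / ‖s‖| :=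
            abs_min_sub_min_le_max 1 _ 1 _
        _ = |ζ₁ * σY / ‖s‖ - ζ₂ * σY / ‖s‖| := by simp
    have heq : |ζ₁ * σY / ‖s‖ - ζ₂ * σY / ‖s‖| = σY * |ζ₁ - ζ₂| / ‖s‖ := by
      rw [div_sub_div_same, abs_div, abs_of_pos hpos]
      congr 1
      rw [← sub_mul, abs_mul, abs_of_pos hσY]
      ring
    calc |c₁ - c₂| * ‖s‖ ≤ (σY * |ζ₁ - ζ₂| / ‖s‖) * ‖s‖ := by
          apply mul_le_mul_of_nonneg_right _ (norm_nonneg s)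
          rw [← heq]; exact hmin
      _ = σY * |ζ₁ - ζ₂| := div_mul_cancel₀ _ h0
end

section
/- The damage-dependent elasticity operator built from the von Mises projection is Lipschitz in both arguments: for η > 0, define B(ε, ζ) := η (ε − P_{K(ζ)} ε) for ε ∈ S^d and ζ ≥ 0. Then for all ε₁, ε₂ ∈ S^d and all ζ₁, ζ₂ ≥ 0, ‖B(ε₁, ζ₁) − B(ε₂, ζ₂)‖ ≤ η ‖ε₁ − ε₂‖ + η σ_Y |ζ₁ − ζ₂|; in particular, with L_B := η max(1, σ_Y), ‖B(ε₁, ζ₁) − B(ε₂, ζ₂)‖ ≤ L_B (‖ε₁ − ε₂‖ + |ζ₁ − ζ₂|). -/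
open scoped RealInnerProductSpace

/-!
Write `c = ζ σ_Y`. The von Mises projection only moves the deviatoric part, and
`ε - P_{K(ζ)} ε = S_c(ε^D)`, where `S_c v = (1 - c/‖v‖)₊ v` is block soft thresholding, i.e. `v`
minus its projection onto the ball of radius `c`. As the complement of a projection onto a convex
set, `S_c` is nonexpansive; it is moreover `1`-Lipschitz in `c`. Finally `τ ↦ τ^D` is an
orthogonal projection, so `‖ε₁^D - ε₂^D‖ ≤ ‖ε₁ - ε₂‖`.
-/

section SoftThreshold

variable {E : Type*}

noncomputable def softThreshold [SeminormedAddCommGroup E] [NormedSpace ℝ E] (c : ℝ) (v : E) :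
    E :=
  max 0 (1 - c / ‖v‖) • v

section Normed

variable [SeminormedAddCommGroup E] [NormedSpace ℝ E]

lemma sub_softThreshold (c : ℝ) (v : E) : v - softThreshold c v = min 1 (c / ‖v‖) • v := by
  have h : 1 - max 0 (1 - c / ‖v‖) = min 1 (c / ‖v‖) := by
    rw [← min_sub_sub_left, sub_zero, sub_sub_cancel]
  rw [softThreshold, ← h, sub_smul, one_smul]

lemma norm_softThreshold {c : ℝ} (hc : 0 ≤ c) (v : E) :
    ‖softThreshold c v‖ = max 0 (‖v‖ - c) := by
  rcases (norm_nonneg v).eq_or_lt with hv | hv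
  · simp [softThreshold, ← hv, hc]
  · rw [softThreshold, norm_smul, Real.norm_of_nonneg (le_max_left _ _),
      max_mul_of_nonneg _ _ hv.le, sub_mul, div_mul_cancel₀ _ hv.ne', zero_mul, one_mul]

lemma norm_sub_softThreshold_le {c : ℝ} (hc : 0 ≤ c) (v : E) : ‖v - softThreshold c v‖ ≤ c := by
  rcases (norm_nonneg v).eq_or_lt with hv | hv
  · simp [softThreshold, ← hv, hc]
  · rw [sub_softThreshold, norm_smul, Real.norm_of_nonneg (le_min zero_le_one (by positivity)),
      min_mul_of_nonneg _ _ hv.le, div_mul_cancel₀ _ hv.ne']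
    exact min_le_right _ _

lemma norm_softThreshold_sub_softThreshold_le_abs (c₁ c₂ : ℝ) (v : E) :
    ‖softThreshold c₁ v - softThreshold c₂ v‖ ≤ |c₁ - c₂| := by
  rcases (norm_nonneg v).eq_or_lt with hv | hv
  · simp [softThreshold, ← hv]
  calc ‖softThreshold c₁ v - softThreshold c₂ v‖
      = |max (1 - c₁ / ‖v‖) 0 - max (1 - c₂ / ‖v‖) 0| * ‖v‖ := by
        rw [softThreshold, softThreshold, ← sub_smul, norm_smul, Real.norm_eq_abs, max_comm,
          max_comm 0]
    _ ≤ |(1 - c₁ / ‖v‖) - (1 - c₂ / ‖v‖)| * ‖v‖ :=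
        mul_le_mul_of_nonneg_right (abs_max_sub_max_le_abs _ _ _) hv.le
    _ = |c₁ - c₂| := by
        rw [← abs_of_pos hv, ← abs_mul, abs_of_pos hv, abs_sub_comm]
        congr 1
        field_simp
        ring

end Normed

lemma norm_le_norm_add_of_inner_nonneg [SeminormedAddCommGroup E] [InnerProductSpace ℝ E]
    {a b : E} (h : 0 ≤ ⟪a, b⟫) : ‖a‖ ≤ ‖a + b‖ := by
  have : ‖a‖ ^ 2 ≤ ‖a + b‖ ^ 2 := by
    rw [norm_add_sq_real]; nlinarith [sq_nonneg ‖b‖]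
  exact (sq_le_sq₀ (norm_nonneg _) (norm_nonneg _)).mp this

section InnerProduct

variable [NormedAddCommGroup E] [InnerProductSpace ℝ E]

/-- The variational inequality of the projection `v - softThreshold c v` onto the ball of
radius `c`. -/
lemma inner_softThreshold_sub_le {c : ℝ} {q : E} (hq : ‖q‖ ≤ c) (v : E) :
    ⟪softThreshold c v, q - (v - softThreshold c v)⟫ ≤ 0 := by
  rcases le_or_gt (1 - c / ‖v‖) 0 with ht | ht
  · simp [softThreshold, max_eq_left ht]
  rcases eq_or_ne v 0 with rfl | hv
  · simp [softThreshold]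
  have hr : 0 < ‖v‖ := norm_pos_iff.mpr hv
  have hcr : c / ‖v‖ < 1 := by linarith
  have hvq : ⟪v, q⟫ ≤ ‖v‖ * c :=
    (real_inner_le_norm v q).trans (mul_le_mul_of_nonneg_left hq hr.le)
  have hvv : c / ‖v‖ * ‖v‖ ^ 2 = ‖v‖ * c := by field_simp
  rw [sub_softThreshold, softThreshold, max_eq_right ht.le, min_eq_right hcr.le,
    real_inner_smul_left, inner_sub_right, real_inner_smul_right, real_inner_self_eq_norm_sq, hvv]
  exact mul_nonpos_of_nonneg_of_nonpos ht.le (by linarith)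

lemma norm_softThreshold_sub_softThreshold_le {c : ℝ} (hc : 0 ≤ c) (v w : E) :
    ‖softThreshold c v - softThreshold c w‖ ≤ ‖v - w‖ := by
  have hv := inner_softThreshold_sub_le (norm_sub_softThreshold_le hc w) v
  have hw := inner_softThreshold_sub_le (norm_sub_softThreshold_le hc v) w
  have hsplit : v - w = (softThreshold c v - softThreshold c w) +
      ((v - softThreshold c v) - (w - softThreshold c w)) := by abel
  rw [hsplit]
  apply norm_le_norm_add_of_inner_nonneg
  rw [← neg_sub (v - softThreshold c v), inner_neg_right] at hv
  rw [inner_sub_left]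
  linarith

lemma norm_softThreshold_sub_softThreshold_le_add {c₁ : ℝ} (hc₁ : 0 ≤ c₁) (c₂ : ℝ) (v w : E) :
    ‖softThreshold c₁ v - softThreshold c₂ w‖ ≤ ‖v - w‖ + |c₁ - c₂| :=
  (norm_sub_le_norm_sub_add_norm_sub _ (softThreshold c₁ w) _).trans
    (add_le_add (norm_softThreshold_sub_softThreshold_le hc₁ v w)
      (norm_softThreshold_sub_softThreshold_le_abs c₁ c₂ w))

end InnerProduct

end SoftThreshold

namespace MatF

variable {d : ℕ}

lemma trace_add (σ τ : MatF d) : (σ + τ).trace = σ.trace + τ.trace := by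
  simp [trace, Finset.sum_add_distrib]

lemma trace_sub_s12 (σ τ : MatF d) : (σ - τ).trace = σ.trace - τ.trace := by
  simp [trace, Finset.sum_sub_distrib]

lemma trace_smul_s12 (a : ℝ) (τ : MatF d) : (a • τ).trace = a * τ.trace := by
  simp [trace, Finset.mul_sum]

lemma idm_apply (p : Fin d × Fin d) : idm d p = if p.1 = p.2 then 1 else 0 := rfl

lemma trace_idm_s12 : (idm d).trace = d := by
  simp [trace, idm_apply]

lemma inner_idm_s12 (τ : MatF d) : ⟪τ, idm d⟫ = τ.trace := by
  simp [PiLp.inner_apply, idm_apply, Fintype.sum_prod_type, trace]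

lemma dev_add (σ τ : MatF d) : (σ + τ).dev = σ.dev + τ.dev := by
  simp only [dev, trace_add, add_div]
  module

lemma dev_sub (σ τ : MatF d) : (σ - τ).dev = σ.dev - τ.dev := by
  simp only [dev, trace_sub_s12, sub_div]
  module

lemma dev_smul (a : ℝ) (τ : MatF d) : (a • τ).dev = a • τ.dev := by
  simp only [dev, trace_smul_s12, mul_div_assoc]
  module

lemma trace_dev_s12 (τ : MatF d) : τ.dev.trace = 0 := by
  rcases eq_or_ne d 0 with rfl | hd
  · simp [trace]
  · simp [dev, trace_sub_s12, trace_smul_s12, trace_idm_s12, hd]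

lemma dev_dev (τ : MatF d) : τ.dev.dev = τ.dev := by
  rw [dev.eq_1 τ.dev, trace_dev_s12, zero_div, zero_smul, sub_zero]

lemma norm_dev_le (τ : MatF d) : ‖τ.dev‖ ≤ ‖τ‖ := by
  have hτ : τ = τ.dev + (τ.trace / d) • idm d := by simp [dev]
  conv_rhs => rw [hτ]
  exact norm_le_norm_add_of_inner_nonneg
    (by rw [real_inner_smul_right, inner_idm_s12, trace_dev_s12, mul_zero])

lemma isSymm_idm : (idm d).IsSymm := by
  intro i j
  simp [idm_apply, eq_comm]

lemma IsSymm.add {σ τ : MatF d} (hσ : σ.IsSymm) (hτ : τ.IsSymm) : (σ + τ).IsSymm :=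
  fun i j => by simp only [PiLp.add_apply, hσ i j, hτ i j]

lemma IsSymm.sub {σ τ : MatF d} (hσ : σ.IsSymm) (hτ : τ.IsSymm) : (σ - τ).IsSymm :=
  fun i j => by simp only [PiLp.sub_apply, hσ i j, hτ i j]

lemma IsSymm.smul {τ : MatF d} (hτ : τ.IsSymm) (a : ℝ) : (a • τ).IsSymm :=
  fun i j => by simp only [PiLp.smul_apply, hτ i j]

lemma IsSymm.dev {τ : MatF d} (hτ : τ.IsSymm) : τ.dev.IsSymm :=
  hτ.sub (isSymm_idm.smul _)

end MatF

open MatF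

lemma convex_vonMises (d : ℕ) (σY ζ : ℝ) : Convex ℝ (vonMises d σY ζ) := by
  rintro p ⟨hps, hpn⟩ q ⟨hqs, hqn⟩ a b ha hb hab
  refine ⟨(hps.smul a).add (hqs.smul b), ?_⟩
  calc ‖(a • p + b • q).dev‖ ≤ a * ‖p.dev‖ + b * ‖q.dev‖ := by
        rw [dev_add, dev_smul, dev_smul]
        refine (norm_add_le _ _).trans_eq ?_
        rw [norm_smul, norm_smul, Real.norm_of_nonneg ha, Real.norm_of_nonneg hb]
    _ ≤ a * (ζ * σY) + b * (ζ * σY) := by gcongr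
    _ = ζ * σY := by rw [← add_mul, hab, one_mul]

/-- In a strictly convex space the midpoint of two distinct nearest points would be nearer. -/
lemma IsProjOn.eq {d : ℕ} {K : Set (MatF d)} (hK : Convex ℝ K) {x p q : MatF d}
    (hp : IsProjOn K x p) (hq : IsProjOn K x q) : p = q := by
  have hpq : ‖x - p‖ = ‖x - q‖ := by
    simpa only [dist_eq_norm] using le_antisymm (hp.2 q hq.1) (hq.2 p hp.1)
  have hmid : ‖x - p‖ ≤ ‖(1 / 2 : ℝ) • ((x - p) + (x - q))‖ := by
    have h := hp.2 _ (hK hp.1 hq.1 (by norm_num : (0 : ℝ) ≤ 1 / 2)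
      (by norm_num : (0 : ℝ) ≤ 1 / 2) (by norm_num))
    have hx : (1 / 2 : ℝ) • ((x - p) + (x - q)) = x - ((1 / 2 : ℝ) • p + (1 / 2 : ℝ) • q) := by
      module
    rwa [hx, ← dist_eq_norm, ← dist_eq_norm]
  by_contra hne
  exact hmid.not_gt ((norm_midpoint_lt_iff hpq).mpr (fun h => hne (sub_right_injective h)))

lemma isProjOn_vonMises {d : ℕ} {σY ζ : ℝ} (hc : 0 ≤ ζ * σY) {ε : MatF d} (hε : ε.IsSymm) :
    IsProjOn (vonMises d σY ζ) ε (ε - softThreshold (ζ * σY) ε.dev) := by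
  refine ⟨⟨hε.sub (hε.dev.smul _), ?_⟩, fun q ⟨_, hq⟩ => ?_⟩
  · rw [dev_sub, softThreshold, dev_smul, dev_dev, ← softThreshold]
    exact norm_sub_softThreshold_le hc _
  · rw [dist_eq_norm, dist_eq_norm, sub_sub_cancel, norm_softThreshold hc]
    refine max_le (norm_nonneg _) ?_
    calc ‖ε.dev‖ - ζ * σY ≤ ‖ε.dev‖ - ‖q.dev‖ := by linarith
      _ ≤ ‖ε.dev - q.dev‖ := norm_sub_norm_le _ _
      _ = ‖(ε - q).dev‖ := by rw [dev_sub]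
      _ ≤ ‖ε - q‖ := norm_dev_le _

lemma IsProjOn.sub_eq_softThreshold {d : ℕ} {σY ζ : ℝ} {ε p : MatF d} (hε : ε.IsSymm)
    (hp : IsProjOn (vonMises d σY ζ) ε p) : ε - p = softThreshold (ζ * σY) ε.dev := by
  have hc : 0 ≤ ζ * σY := (norm_nonneg _).trans hp.1.2
  rw [hp.eq (convex_vonMises d σY ζ) (isProjOn_vonMises hc hε), sub_sub_cancel]

theorem elasticity_operator_lipschitz_general (d : ℕ) (σY : ℝ) (hσY : 0 < σY)
    (η : ℝ) (hη : 0 < η) (ε₁ ε₂ : MatF d) (hε₁ : ε₁.IsSymm) (hε₂ : ε₂.IsSymm)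
    (ζ₁ ζ₂ : ℝ) (p₁ p₂ : MatF d)
    (hp₁ : IsProjOn (vonMises d σY ζ₁) ε₁ p₁) (hp₂ : IsProjOn (vonMises d σY ζ₂) ε₂ p₂) :
    ‖η • (ε₁ - p₁) - η • (ε₂ - p₂)‖ ≤ η * ‖ε₁ - ε₂‖ + η * σY * |ζ₁ - ζ₂| ∧
    ‖η • (ε₁ - p₁) - η • (ε₂ - p₂)‖ ≤ η * max 1 σY * (‖ε₁ - ε₂‖ + |ζ₁ - ζ₂|) := by
  have hB : ‖(ε₁ - p₁) - (ε₂ - p₂)‖ ≤ ‖ε₁ - ε₂‖ + σY * |ζ₁ - ζ₂| := by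
    rw [hp₁.sub_eq_softThreshold hε₁, hp₂.sub_eq_softThreshold hε₂]
    calc _ ≤ ‖ε₁.dev - ε₂.dev‖ + |ζ₁ * σY - ζ₂ * σY| :=
          norm_softThreshold_sub_softThreshold_le_add ((norm_nonneg _).trans hp₁.1.2) _ _ _
      _ ≤ ‖ε₁ - ε₂‖ + σY * |ζ₁ - ζ₂| := by
          rw [← dev_sub, ← sub_mul, abs_mul, abs_of_pos hσY, mul_comm]
          gcongr
          exact norm_dev_le _
  have hηB : ‖η • (ε₁ - p₁) - η • (ε₂ - p₂)‖ ≤ η * ‖ε₁ - ε₂‖ + η * σY * |ζ₁ - ζ₂| := by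
    rw [← smul_sub, norm_smul, Real.norm_of_nonneg hη.le, mul_assoc, ← mul_add]
    exact mul_le_mul_of_nonneg_left hB hη.le
  refine ⟨hηB, hηB.trans ?_⟩
  calc η * ‖ε₁ - ε₂‖ + η * σY * |ζ₁ - ζ₂| = η * (1 * ‖ε₁ - ε₂‖ + σY * |ζ₁ - ζ₂|) := by ring
    _ ≤ η * (max 1 σY * ‖ε₁ - ε₂‖ + max 1 σY * |ζ₁ - ζ₂|) := by
        gcongr
        exacts [le_max_left _ _, le_max_right _ _]
    _ = η * max 1 σY * (‖ε₁ - ε₂‖ + |ζ₁ - ζ₂|) := by ring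

/-- The damage-dependent elasticity operator `B(ε, ζ) = η (ε − P_{K(ζ)} ε)` built from the
von Mises projection is Lipschitz in both arguments:
`‖B(ε₁, ζ₁) − B(ε₂, ζ₂)‖ ≤ η ‖ε₁ − ε₂‖ + η σ_Y |ζ₁ − ζ₂|`, and in particular with
`L_B = η max(1, σ_Y)` one has `‖B(ε₁, ζ₁) − B(ε₂, ζ₂)‖ ≤ L_B (‖ε₁ − ε₂‖ + |ζ₁ − ζ₂|)`. -/
theorem elasticity_operator_lipschitz (d : ℕ) (hd : 1 ≤ d) (σY : ℝ) (hσY : 0 < σY)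
    (η : ℝ) (hη : 0 < η) (ε₁ ε₂ : MatF d) (hε₁ : ε₁.IsSymm) (hε₂ : ε₂.IsSymm)
    (ζ₁ ζ₂ : ℝ) (hζ₁ : 0 ≤ ζ₁) (hζ₂ : 0 ≤ ζ₂) (p₁ p₂ : MatF d)
    (hp₁ : IsProjOn (vonMises d σY ζ₁) ε₁ p₁) (hp₂ : IsProjOn (vonMises d σY ζ₂) ε₂ p₂) :
    ‖η • (ε₁ - p₁) - η • (ε₂ - p₂)‖ ≤ η * ‖ε₁ - ε₂‖ + η * σY * |ζ₁ - ζ₂| ∧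
    ‖η • (ε₁ - p₁) - η • (ε₂ - p₂)‖ ≤ η * max 1 σY * (‖ε₁ - ε₂‖ + |ζ₁ - ζ₂|) :=
  elasticity_operator_lipschitz_general d σY hσY η hη ε₁ ε₂ hε₁ hε₂ ζ₁ ζ₂ p₁ p₂ hp₁ hp₂
end
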